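/- arXiv:1604.04397 — 2 statements merged into one kernel-verified Lean document; each statement's English description precedes it below -/
import Mathlib

section
/- Let L/K be a Galois extension of degree m and θ ∈ Gal(L/K). For x ∈ L^n, the rank over K of the matrix X_θ with rows (θ^i(x_1),…,θ^i(x_n)), i = 0,…,m−1, equals the rank over K of the coordinate matrix ext_β(x) ∈ K^{m×n}, i.e., ω_{θ,K}(x) = ω_B(x). -/
/-!
The map `y ↦ (θ^i y)_i` is `K`-linear and injective (each `θ^i` is a bijection), and so is the
coordinate map `β.equivFun`. The columns of `X_θ` and of `ext_β(x)` are the images of the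
family `x` under these two maps, so both column spans are isomorphic to the `K`-span of `x`.
-/

open Module Submodule

theorem finrank_span_range_comp_of_injective {R M N ι : Type*} [Semiring R]
    [AddCommMonoid M] [Module R M] [AddCommMonoid N] [Module R N]
    {f : M →ₗ[R] N} (hf : Function.Injective f) (v : ι → M) :
    finrank R (span R (Set.range (f ∘ v))) = finrank R (span R (Set.range v)) := by
  rw [Set.range_comp, ← map_span]
  exact (equivMapOfInjective f hf _).symm.finrank_eq

theorem LinearMap.pi_injective_of_injective {R M ι : Type*} {N : ι → Type*} [Semiring R]
    [AddCommMonoid M] [Module R M] [∀ i, AddCommMonoid (N i)] [∀ i, Module R (N i)]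
    (f : ∀ i, M →ₗ[R] N i) (i : ι) (hf : Function.Injective (f i)) :
    Function.Injective (LinearMap.pi f) :=
  fun _ _ h => hf (congrFun h i)

theorem Module.Basis.rank_toMatrix {K M ι ι' : Type*} [Field K] [AddCommGroup M] [Module K M]
    [Fintype ι] [Fintype ι'] (β : Basis ι K M) (v : ι' → M) :
    (β.toMatrix v).rank = finrank K (span K (Set.range v)) := by
  have hcols : (β.toMatrix v).col = β.equivFun ∘ v := by
    ext j i
    simp [Matrix.col_apply, Basis.toMatrix_apply]
  rw [Matrix.rank_eq_finrank_span_cols, hcols]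
  exact finrank_span_range_comp_of_injective (f := β.equivFun.toLinearMap) β.equivFun.injective v

theorem rank_K_theta_matrix_eq_rank_ext_general (K L : Type*) [Field K] [Field L]
    [Algebra K L] (m : ℕ)
    (θ : L ≃ₐ[K] L)
    (β : Module.Basis (Fin m) K L) (n : ℕ) (x : Fin n → L)
    (Xθ : Matrix (Fin m) (Fin n) L)
    (hXθ : ∀ i j, Xθ i j = (θ ^ (i : ℕ)) (x j))
    (XB : Matrix (Fin m) (Fin n) K) (hXB : ∀ i j, XB i j = β.repr (x j) i) :
    Module.finrank K (Submodule.span K (Set.range fun j : Fin n => fun i : Fin m => Xθ i j))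
      = XB.rank := by
  let powers : L →ₗ[K] Fin m → L := LinearMap.pi fun i : Fin m => (θ ^ (i : ℕ)).toLinearMap
  have hpowers : Function.Injective powers :=
    LinearMap.pi_injective_of_injective _ β.index_nonempty.some (AlgEquiv.injective _)
  have hcols : (fun j : Fin n => fun i : Fin m => Xθ i j) = powers ∘ x := by
    ext j i
    simp [powers, hXθ]
  have hXB' : XB = β.toMatrix x := by
    ext i j
    rw [hXB, Basis.toMatrix_apply]
  rw [hcols, finrank_span_range_comp_of_injective hpowers, hXB', β.rank_toMatrix]

/-- ω_{θ,K}(x) = ω_B(x):  for a Galois extension L/K of degree m with Galois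
group generated by θ, the K-rank (dimension of the K-span of the columns) of
the matrix X_θ = (θ^i(x_j)) equals the rank over K of the coordinate matrix
ext_β(x). -/
theorem rank_K_theta_matrix_eq_rank_ext (K L : Type*) [Field K] [Field L]
    [Algebra K L] [IsGalois K L] (m : ℕ) (hm : Module.finrank K L = m)
    (θ : L ≃ₐ[K] L) (hθ : ∀ σ : L ≃ₐ[K] L, σ ∈ Subgroup.zpowers θ)
    (β : Module.Basis (Fin m) K L) (n : ℕ) (x : Fin n → L)
    (Xθ : Matrix (Fin m) (Fin n) L)
    (hXθ : ∀ i j, Xθ i j = (θ ^ (i : ℕ)) (x j))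
    (XB : Matrix (Fin m) (Fin n) K) (hXB : ∀ i j, XB i j = β.repr (x j) i) :
    Module.finrank K (Submodule.span K (Set.range fun j : Fin n => fun i : Fin m => Xθ i j))
      = XB.rank :=
  rank_K_theta_matrix_eq_rank_ext_general K L m θ β n x Xθ hXθ XB hXB
end

section
/- Let L/K be a cyclic Galois extension of degree m with Galois group generated by θ, and let g_1,…,g_n ∈ L (n ≤ m) be linearly independent over K. Then the evaluation map sending a θ-polynomial f of degree < k (k ≤ n) to (f(g_1),…,f(g_n)) ∈ L^n is injective, so the Gabidulin code C = {(f(g_1),…,f(g_n)) : f ∈ L[x;θ], deg f < k} is an L-linear code of dimension k. -/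
/-!
Evaluating a θ-polynomial of degree `< k` at `g₁, …, gₙ` is multiplication of its coefficient
vector by the Moore matrix `(θ^i (g j))`. Its top `k × k` block is invertible: applying `θ` to
a vector in its left kernel and eliminating one coordinate gives a shorter such vector, so by
induction all ratios of its entries are `θ`-fixed, hence lie in `K` (as `θ` generates the Galois
group), contradicting the `K`-independence of the `g j`. Evaluation is therefore an injective
`L`-linear map `L^k → L^n`, whose image has dimension `k`.
-/

open Finset

section Moore

variable {K L : Type*} [Field K] [Field L] [Algebra K L]

theorem mem_range_algebraMap_of_apply_eq_self [IsGalois K L] {θ : L ≃ₐ[K] L}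
    (hθ : ∀ σ : L ≃ₐ[K] L, σ ∈ Subgroup.zpowers θ) {x : L} (hx : θ x = x) :
    x ∈ Set.range (algebraMap K L) := by
  have hθx : θ ∈ MulAction.stabilizer (L ≃ₐ[K] L) x := hx
  exact (InfiniteGalois.mem_range_algebraMap_iff_fixed x).2 fun σ =>
    Subgroup.zpowers_le.mpr hθx (hθ σ)

theorem LinearIndependent.eq_zero_of_sum_mul_eq_zero {ι : Type*} [Fintype ι] {g : ι → L}
    (hg : LinearIndependent K g) {a : ι → L} (hsum : ∑ j, a j * g j = 0) {j₀ : ι}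
    (hratio : ∀ j, a j / a j₀ ∈ Set.range (algebraMap K L)) : a j₀ = 0 := by
  by_contra hj₀
  choose c hc using hratio
  have hcg : ∑ j, c j • g j = 0 := by
    refine (mul_eq_zero.mp ?_).resolve_left hj₀
    rw [mul_sum, ← hsum]
    refine sum_congr rfl fun j _ => ?_
    rw [Algebra.smul_def, hc j]
    field_simp
  have hc₀ : algebraMap K L (c j₀) = 1 := by rw [hc j₀, div_self hj₀]
  rw [Fintype.linearIndependent_iff.mp hg c hcg j₀, map_zero] at hc₀
  exact zero_ne_one hc₀

theorem eq_zero_of_sum_mul_pow_apply_eq_zero {θ : L ≃ₐ[K] L}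
    (hfix : ∀ x : L, θ x = x → x ∈ Set.range (algebraMap K L)) {ι : Type*} [Fintype ι]
    (r : ℕ) {g : ι → L} (hg : LinearIndependent K g) {a : ι → L} {s : Finset ι}
    (ha : ∀ j ∉ s, a j = 0) (hs : #s ≤ r) (hrel : ∀ i < r, ∑ j, a j * (θ ^ i) (g j) = 0) :
    a = 0 := by
  classical
  induction r generalizing g a s with
  | zero =>
    obtain rfl : s = ∅ := card_eq_zero.mp (Nat.le_zero.mp hs)
    exact funext fun j => ha j (notMem_empty j)
  | succ r ih =>
    by_contra hne
    obtain ⟨j₀, hj₀⟩ : ∃ j, a j ≠ 0 := by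
      by_contra! h
      exact hne (funext h)
    have hj₀s : j₀ ∈ s := by_contra fun h => hj₀ (ha j₀ h)
    set b : ι → L := fun j => θ (a j₀) * a j - a j₀ * θ (a j)
    have hb : b = 0 := by
      refine ih (hg.map' θ.toLinearMap (LinearMap.ker_eq_bot.mpr θ.injective))
        (s := s.erase j₀) (fun j hj => ?_) ?_ fun i hi => ?_
      · rcases eq_or_ne j j₀ with rfl | hjj₀
        · simp only [b]; ring
        · simp [b, ha j (fun h => hj (mem_erase.mpr ⟨hjj₀, h⟩))]
      · rw [card_erase_of_mem hj₀s]; omega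
      · have hshift : ∑ j, θ (a j) * (θ ^ (i + 1)) (g j) = 0 := by
          simpa only [map_sum, map_mul, map_zero, pow_succ', AlgEquiv.mul_apply]
            using congrArg θ (hrel i (by omega))
        calc ∑ j, b j * (θ ^ i) (θ (g j))
            = θ (a j₀) * ∑ j, a j * (θ ^ (i + 1)) (g j)
              - a j₀ * ∑ j, θ (a j) * (θ ^ (i + 1)) (g j) := by
              simp only [mul_sum, ← sum_sub_distrib, b, pow_succ, AlgEquiv.mul_apply]
              exact sum_congr rfl fun j _ => by ring
          _ = 0 := by rw [hrel (i + 1) (by omega), hshift]; ring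
    have hratio : ∀ j, a j / a j₀ ∈ Set.range (algebraMap K L) := fun j => by
      refine hfix _ ?_
      have hθj₀ : θ (a j₀) ≠ 0 := by simpa using hj₀
      rw [map_div₀, div_eq_div_iff hθj₀ hj₀]
      have hbj : θ (a j₀) * a j - a j₀ * θ (a j) = 0 := congrFun hb j
      linear_combination -hbj
    exact hj₀ <| hg.eq_zero_of_sum_mul_eq_zero (by simpa using hrel 0 (by omega)) hratio

def mooreMatrix {ι : Type*} (θ : L ≃ₐ[K] L) (g : ι → L) (k : ℕ) : Matrix ι (Fin k) L :=
  Matrix.of fun j i => (θ ^ (i : ℕ)) (g j)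

theorem isUnit_mooreMatrix {θ : L ≃ₐ[K] L}
    (hfix : ∀ x : L, θ x = x → x ∈ Set.range (algebraMap K L)) {k : ℕ} {g : Fin k → L}
    (hg : LinearIndependent K g) : IsUnit (mooreMatrix θ g k) := by
  refine Matrix.vecMul_injective_iff_isUnit.mp fun a b hab => sub_eq_zero.mp <|
    eq_zero_of_sum_mul_pow_apply_eq_zero hfix k hg (s := univ) (by simp) (by simp)
      fun i hi => ?_
  simpa [mooreMatrix, Matrix.vecMul, dotProduct, sub_mul, sub_eq_zero]
    using congrFun hab ⟨i, hi⟩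

theorem mooreMatrix_mulVec_injective {θ : L ≃ₐ[K] L}
    (hfix : ∀ x : L, θ x = x → x ∈ Set.range (algebraMap K L)) {k n : ℕ} (hkn : k ≤ n)
    {g : Fin n → L} (hg : LinearIndependent K g) :
    Function.Injective (mooreMatrix θ g k).mulVec := fun f f' h =>
  Matrix.mulVec_injective_iff_isUnit.mpr
    (isUnit_mooreMatrix hfix (hg.comp _ (Fin.castLE_injective hkn))) <| funext fun j => by
      simpa [mooreMatrix, Matrix.mulVec, dotProduct] using congrFun h (Fin.castLE hkn j)

end Moore

theorem gabidulin_evaluation_injective_general (K L : Type*) [Field K] [Field L]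
    [Algebra K L] [IsGalois K L]
    (θ : L ≃ₐ[K] L) (hθ : ∀ σ : L ≃ₐ[K] L, σ ∈ Subgroup.zpowers θ)
    (n k : ℕ) (hkn : k ≤ n)
    (g : Fin n → L) (hg : LinearIndependent K g)
    (E : (Fin k → L) → (Fin n → L))
    (hE : ∀ f j, E f j = ∑ i : Fin k, f i * (θ ^ (i : ℕ)) (g j)) :
    Function.Injective E ∧
      Module.finrank L (Submodule.span L (Set.range E)) = k := by
  obtain rfl : E = (mooreMatrix θ g k).mulVecLin := funext fun f => funext fun j => by
    simp [hE, mooreMatrix, Matrix.mulVec, dotProduct, mul_comm]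
  have hinj : Function.Injective (mooreMatrix θ g k).mulVecLin :=
    mooreMatrix_mulVec_injective (fun _ => mem_range_algebraMap_of_apply_eq_self hθ) hkn hg
  refine ⟨hinj, ?_⟩
  rw [← LinearMap.coe_range, Submodule.span_eq, LinearMap.finrank_range_of_inj hinj,
    Module.finrank_fin_fun]

/-- For a cyclic Galois extension L/K of degree m generated by θ and
g₁,…,gₙ ∈ L (n ≤ m) linearly independent over K, the evaluation map sending
a θ-polynomial f of degree < k (k ≤ n) to (f(g₁),…,f(gₙ)) is injective;
hence the Gabidulin code is an L-linear code of dimension k. -/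
theorem gabidulin_evaluation_injective (K L : Type*) [Field K] [Field L]
    [Algebra K L] [IsGalois K L] (m : ℕ) (hm : Module.finrank K L = m)
    (θ : L ≃ₐ[K] L) (hθ : ∀ σ : L ≃ₐ[K] L, σ ∈ Subgroup.zpowers θ)
    (n k : ℕ) (hkn : k ≤ n) (hnm : n ≤ m)
    (g : Fin n → L) (hg : LinearIndependent K g)
    (E : (Fin k → L) → (Fin n → L))
    (hE : ∀ f j, E f j = ∑ i : Fin k, f i * (θ ^ (i : ℕ)) (g j)) :
    Function.Injective E ∧
      Module.finrank L (Submodule.span L (Set.range E)) = k :=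
  gabidulin_evaluation_injective_general K L θ hθ n k hkn g hg E hE
end
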